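/- arXiv:math/0102139 — 4 statements merged into one kernel-verified Lean document; each statement's English description precedes it below -/
import Mathlib

section
/- The pair (f₁, id) with f₁(i,j) = (−i, 1−j) is an isomorphism between G(n,p,q,m) and G(n,p,−q,m); that is, f₁ is a bijection of Z_n × Z_{2p} satisfying f₁εₖ = εₖ'f₁ for each colour k ∈ {0,1,2,3}, where εₖ and εₖ' are the involutions defining G(n,p,q,m) and G(n,p,−q,m) respectively. -/
/-- The sign function μ : Z_{2p} → {−1,+1}: +1 iff the representative of j lies in {1,…,p}. -/
def mu (p : ℕ) (j : ZMod (2*p)) : ℤ :=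
  if 1 ≤ j.val ∧ j.val ≤ p then 1 else -1

/-- ε₀(i,j) = (i + m·μ(j−q), 1−j+2q). -/
def eps0 (n p : ℕ) (q : ZMod (2*p)) (m : ZMod n) :
    ZMod n × ZMod (2*p) → ZMod n × ZMod (2*p) :=
  fun v => (v.1 + m * ((mu p (v.2 - q) : ℤ) : ZMod n), 1 - v.2 + 2*q)

/-- ε₁(i,j) = (i, j−(−1)^j). -/
def eps1 (n p : ℕ) : ZMod n × ZMod (2*p) → ZMod n × ZMod (2*p) :=
  fun v => (v.1, v.2 - (-1 : ZMod (2*p)) ^ v.2.val)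

/-- ε₂(i,j) = (i, j+(−1)^j). -/
def eps2 (n p : ℕ) : ZMod n × ZMod (2*p) → ZMod n × ZMod (2*p) :=
  fun v => (v.1, v.2 + (-1 : ZMod (2*p)) ^ v.2.val)

/-- ε₃(i,j) = (i+μ(j), 1−j). -/
def eps3 (n p : ℕ) : ZMod n × ZMod (2*p) → ZMod n × ZMod (2*p) :=
  fun v => (v.1 + ((mu p v.2 : ℤ) : ZMod n), 1 - v.2)

lemma mu_one_sub {p : ℕ} (hp : 0 < p) (x : ZMod (2*p)) :
    mu p (1 - x) = - mu p x := by
  haveI : NeZero (2*p) := ⟨by omega⟩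
  have hx : x.val < 2*p := ZMod.val_lt x
  have val1 : (1 : ZMod (2*p)).val = 1 := by
    rw [ZMod.val_one_eq_one_mod, Nat.mod_eq_of_lt (by omega)]
  by_cases h0 : x.val = 0
  · have hx0 : x = 0 := (ZMod.val_eq_zero x).mp h0
    subst hx0
    simp [mu, val1, Nat.one_le_iff_ne_zero, hp.ne']
  · have hcast : (1 - x) = ((2*p + 1 - x.val : ℕ) : ZMod (2*p)) := by
      rw [Nat.cast_sub (by omega : x.val ≤ 2*p+1), Nat.cast_add, Nat.cast_one,
        ZMod.natCast_self, ZMod.natCast_val, ZMod.cast_id]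
      ring
    have hval : (1 - x).val = (2*p + 1 - x.val) % (2*p) := by
      rw [hcast, ZMod.val_natCast]
    by_cases h1 : x.val = 1
    · have hz : (1 - x).val = 0 := by
        rw [hval, h1, Nat.add_sub_cancel, Nat.mod_self]
      simp [mu, hz, h1, Nat.one_le_iff_ne_zero, hp.ne']
    · have ht : (1 - x).val = 2*p + 1 - x.val := by
        rw [hval, Nat.mod_eq_of_lt (by omega)]
      rw [mu, mu, ht]
      split_ifs <;> first | omega | norm_num

lemma neg_one_pow_one_sub {p : ℕ} (hp : 0 < p) (x : ZMod (2*p)) :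
    (-1 : ZMod (2*p)) ^ ((1 - x).val) = -(-1 : ZMod (2*p)) ^ (x.val) := by
  haveI : NeZero (2*p) := ⟨by omega⟩
  have hsum : ((1-x).val + x.val) % (2*p) = 1 := by
    rw [← ZMod.val_add, sub_add_cancel, ZMod.val_one_eq_one_mod, Nat.mod_eq_of_lt (by omega)]
  have h := Nat.div_add_mod ((1-x).val + x.val) (2*p)
  rw [hsum] at h
  set k := ((1-x).val + x.val) / (2*p) with hk
  have h2 : (1-x).val + x.val = 2*(p*k) + 1 := by rw [← h]; ring
  have hodd : Odd ((1-x).val + x.val) := ⟨p*k, h2⟩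
  have hm : (-1 : ZMod (2*p)) ^ ((1-x).val) * (-1) ^ (x.val) = -1 := by
    rw [← pow_add]; exact Odd.neg_one_pow hodd
  have hsq : (-1 : ZMod (2*p)) ^ (x.val) * (-1) ^ (x.val) = 1 := by
    rw [← pow_add]; exact Even.neg_one_pow ⟨x.val, rfl⟩
  calc (-1 : ZMod (2*p)) ^ ((1-x).val)
      = (-1) ^ ((1-x).val) * ((-1) ^ (x.val) * (-1) ^ (x.val)) := by rw [hsq, mul_one]
    _ = ((-1) ^ ((1-x).val) * (-1) ^ (x.val)) * (-1) ^ (x.val) := by ring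
    _ = -(-1) ^ (x.val) := by rw [hm]; ring

/-- (f₁, id) with f₁(i,j) = (−i, 1−j) is an isomorphism between G(n,p,q,m)
and G(n,p,−q,m). -/
theorem f1_isom (n p : ℕ) (hn : 0 < n) (hp : 0 < p)
    (q : ZMod (2*p)) (m : ZMod n) :
    Function.Bijective (fun v : ZMod n × ZMod (2*p) => ((-v.1, 1 - v.2) : ZMod n × ZMod (2*p))) ∧
    (∀ v : ZMod n × ZMod (2*p),
      (fun v : ZMod n × ZMod (2*p) => ((-v.1, 1 - v.2) : ZMod n × ZMod (2*p))) (eps0 n p q m v)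
        = eps0 n p (-q) m ((-v.1, 1 - v.2))) ∧
    (∀ v : ZMod n × ZMod (2*p),
      (fun v : ZMod n × ZMod (2*p) => ((-v.1, 1 - v.2) : ZMod n × ZMod (2*p))) (eps1 n p v)
        = eps1 n p ((-v.1, 1 - v.2))) ∧
    (∀ v : ZMod n × ZMod (2*p),
      (fun v : ZMod n × ZMod (2*p) => ((-v.1, 1 - v.2) : ZMod n × ZMod (2*p))) (eps2 n p v)
        = eps2 n p ((-v.1, 1 - v.2))) ∧
    (∀ v : ZMod n × ZMod (2*p),
      (fun v : ZMod n × ZMod (2*p) => ((-v.1, 1 - v.2) : ZMod n × ZMod (2*p))) (eps3 n p v)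
        = eps3 n p ((-v.1, 1 - v.2))) := by
  refine ⟨?_, ?_, ?_, ?_, ?_⟩
  · exact Function.Involutive.bijective (fun v => by
      simp only [neg_neg, sub_sub_cancel])
  · intro v
    simp only [eps0]
    refine Prod.ext ?_ ?_
    · show -(v.1 + m * ((mu p (v.2 - q) : ℤ) : ZMod n))
        = -v.1 + m * ((mu p ((1 - v.2) - -q) : ℤ) : ZMod n)
      have h1 : (1 - v.2) - -q = 1 - (v.2 - q) := by ring
      rw [h1, mu_one_sub hp]
      push_cast
      ring
    · show 1 - (1 - v.2 + 2*q) = 1 - (1 - v.2) + 2 * -q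
      ring
  · intro v
    simp only [eps1]
    refine Prod.ext rfl ?_
    show 1 - (v.2 - (-1 : ZMod (2*p)) ^ v.2.val)
      = (1 - v.2) - (-1 : ZMod (2*p)) ^ ((1 - v.2).val)
    rw [neg_one_pow_one_sub hp]
    ring
  · intro v
    simp only [eps2]
    refine Prod.ext rfl ?_
    show 1 - (v.2 + (-1 : ZMod (2*p)) ^ v.2.val)
      = (1 - v.2) + (-1 : ZMod (2*p)) ^ ((1 - v.2).val)
    rw [neg_one_pow_one_sub hp]
    ring
  · intro v
    simp only [eps3]
    refine Prod.ext ?_ ?_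
    · show -(v.1 + ((mu p v.2 : ℤ) : ZMod n))
        = -v.1 + ((mu p (1 - v.2) : ℤ) : ZMod n)
      rw [mu_one_sub hp]
      push_cast
      ring
    · show 1 - (1 - v.2) = 1 - (1 - v.2)
      rfl
end

section
/- The pair (s, σ) with s(i,j) = (−i, p+j), σ = id if p is even and σ = (1 2) if p is odd, is an automorphism of G(n,p,q,m): s is an involutive bijection and sεₖ = ε_{σ(k)}s for each colour k ∈ {0,1,2,3}. -/
lemma val_p_add (p : ℕ) (hp : 0 < p) (x : ZMod (2*p)) :
    ((p : ZMod (2*p)) + x).val = if x.val < p then p + x.val else x.val - p := by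
  haveI : NeZero (2*p) := ⟨by omega⟩
  have hx := ZMod.val_lt x
  rw [ZMod.val_add, ZMod.val_natCast_of_lt (by omega : p < 2*p)]
  split
  · rw [Nat.mod_eq_of_lt (by omega)]
  · rw [Nat.mod_eq_sub_mod (by omega), Nat.mod_eq_of_lt (by omega)]
    omega

lemma mu_p_add (p : ℕ) (hp : 0 < p) (x : ZMod (2*p)) :
    mu p ((p : ZMod (2*p)) + x) = - mu p x := by
  haveI : NeZero (2*p) := ⟨by omega⟩
  have hx := ZMod.val_lt x
  unfold mu
  rw [val_p_add p hp x]
  rcases lt_or_ge x.val p with h | h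
  · rw [if_pos h]; split_ifs <;> omega
  · rw [if_neg (show ¬ x.val < p by omega)]; split_ifs <;> omega

lemma neg_one_pow_val_p_add (p : ℕ) (hp : 0 < p) (x : ZMod (2*p)) :
    (-1 : ZMod (2*p)) ^ ((p : ZMod (2*p)) + x).val = (-1)^p * (-1)^x.val := by
  rw [val_p_add p hp x]
  split
  · rw [pow_add]
  · rename_i h
    rw [show x.val = p + (x.val - p) from by omega, pow_add, ← mul_assoc, ← pow_add,
        show p + p = 2*p from by ring, pow_mul, neg_one_sq, one_pow, one_mul,
        show p + (x.val - p) - p = x.val - p from by omega]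

lemma p_add_p (p : ℕ) : (p : ZMod (2*p)) + p = 0 := by
  have : ((2*p : ℕ) : ZMod (2*p)) = 0 := ZMod.natCast_self _
  push_cast at this
  linear_combination this

/-- (s, σ) with s(i,j) = (−i, p+j), σ = id for p even and σ = (1 2) for p odd,
is an automorphism of G(n,p,q,m): s is an involutive bijection and
s εₖ = ε_{σ(k)} s for each colour. -/
theorem s_automorphism (n p : ℕ) (hn : 0 < n) (hp : 0 < p)
    (q : ZMod (2*p)) (m : ZMod n) :
    Function.Involutive
      (fun v : ZMod n × ZMod (2*p) => ((-v.1, (p : ZMod (2*p)) + v.2) : ZMod n × ZMod (2*p))) ∧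
    Function.Bijective
      (fun v : ZMod n × ZMod (2*p) => ((-v.1, (p : ZMod (2*p)) + v.2) : ZMod n × ZMod (2*p))) ∧
    (∀ v : ZMod n × ZMod (2*p),
      (fun v : ZMod n × ZMod (2*p) => ((-v.1, (p : ZMod (2*p)) + v.2) : ZMod n × ZMod (2*p)))
        (eps0 n p q m v) = eps0 n p q m ((-v.1, (p : ZMod (2*p)) + v.2))) ∧
    (∀ v : ZMod n × ZMod (2*p),
      (fun v : ZMod n × ZMod (2*p) => ((-v.1, (p : ZMod (2*p)) + v.2) : ZMod n × ZMod (2*p)))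
        (eps3 n p v) = eps3 n p ((-v.1, (p : ZMod (2*p)) + v.2))) ∧
    (Even p →
      (∀ v : ZMod n × ZMod (2*p),
        (fun v : ZMod n × ZMod (2*p) => ((-v.1, (p : ZMod (2*p)) + v.2) : ZMod n × ZMod (2*p)))
          (eps1 n p v) = eps1 n p ((-v.1, (p : ZMod (2*p)) + v.2))) ∧
      (∀ v : ZMod n × ZMod (2*p),
        (fun v : ZMod n × ZMod (2*p) => ((-v.1, (p : ZMod (2*p)) + v.2) : ZMod n × ZMod (2*p)))
          (eps2 n p v) = eps2 n p ((-v.1, (p : ZMod (2*p)) + v.2)))) ∧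
    (Odd p →
      (∀ v : ZMod n × ZMod (2*p),
        (fun v : ZMod n × ZMod (2*p) => ((-v.1, (p : ZMod (2*p)) + v.2) : ZMod n × ZMod (2*p)))
          (eps1 n p v) = eps2 n p ((-v.1, (p : ZMod (2*p)) + v.2))) ∧
      (∀ v : ZMod n × ZMod (2*p),
        (fun v : ZMod n × ZMod (2*p) => ((-v.1, (p : ZMod (2*p)) + v.2) : ZMod n × ZMod (2*p)))
          (eps2 n p v) = eps1 n p ((-v.1, (p : ZMod (2*p)) + v.2)))) := by
  have hpp := p_add_p p
  constructor
  · intro v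
    simp only [neg_neg, ← add_assoc, hpp, zero_add]
  refine ⟨?_, ?_, ?_, ?_, ?_⟩
  · exact Function.Involutive.bijective (fun v => by simp only [neg_neg, ← add_assoc, hpp, zero_add])
  · intro v
    simp only [eps0]
    refine Prod.ext ?_ ?_
    · have : (p : ZMod (2*p)) + v.2 - q = (p : ZMod (2*p)) + (v.2 - q) := by ring
      rw [this, mu_p_add p hp]
      push_cast
      ring
    · have h2p : (p : ZMod (2*p)) + p = 0 := hpp
      simp only
      linear_combination h2p
  · intro v
    simp only [eps3]
    refine Prod.ext ?_ ?_
    · rw [mu_p_add p hp]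
      push_cast
      ring
    · simp only
      linear_combination hpp
  · intro hpe
    have key : ∀ x : ZMod (2*p), (-1 : ZMod (2*p)) ^ ((p : ZMod (2*p)) + x).val
        = (-1)^x.val := by
      intro x
      rw [neg_one_pow_val_p_add p hp, hpe.neg_one_pow, one_mul]
    constructor <;> intro v <;> simp only [eps1, eps2, key] <;> refine Prod.ext rfl ?_ <;>
      simp only <;> ring
  · intro hpo
    have key : ∀ x : ZMod (2*p), (-1 : ZMod (2*p)) ^ ((p : ZMod (2*p)) + x).val
        = -(-1)^x.val := by
      intro x
      rw [neg_one_pow_val_p_add p hp, hpo.neg_one_pow, neg_one_mul]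
    constructor <;> intro v <;> simp only [eps1, eps2, key] <;> refine Prod.ext rfl ?_ <;>
      simp only <;> ring
end

section
/- If p is even, then ε₃ε₂(i,j) = ε₂ε₃(i,j) for every i ∈ Z_n and every j ∈ Z_{2p} with j ∉ {0, 1, p, p+1}, and ε₀ε₁(i,j) = ε₁ε₀(i,j) for every i and every j ∉ {q, q+1, q+p, q+p+1}. -/
lemma mu_shift (p : ℕ) (hp2 : 2 ≤ p) (k : ZMod (2*p))
    (h0 : k ≠ 0) (h1 : k ≠ 1) (hP : k ≠ (p : ZMod (2*p)))
    (hP1 : k ≠ (p : ZMod (2*p)) + 1) :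
    mu p (k + 1) = mu p k ∧ mu p (k - 1) = mu p k := by
  haveI : NeZero (2*p) := ⟨by omega⟩
  have hk : ((k.val : ℕ) : ZMod (2*p)) = k := by
    simp [ZMod.natCast_val, ZMod.cast_id]
  set v := k.val with hv
  have hvlt : v < 2*p := ZMod.val_lt k
  have hv0 : v ≠ 0 := by intro h; apply h0; rw [← hk, h]; simp
  have hv1 : v ≠ 1 := by intro h; apply h1; rw [← hk, h]; simp
  have hvp : v ≠ p := by intro h; apply hP; rw [← hk, h]
  have hvp1 : v ≠ p + 1 := by intro h; apply hP1; rw [← hk, h]; push_cast; ring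
  constructor
  · by_cases hc : v + 1 < 2*p
    · have e1 : k + 1 = ((v + 1 : ℕ) : ZMod (2*p)) := by rw [← hk]; push_cast; ring
      have e2 : (k + 1).val = v + 1 := by rw [e1, ZMod.val_cast_of_lt hc]
      unfold mu; rw [e2]; split_ifs <;> omega
    · have hveq : v = 2*p - 1 := by omega
      have e1 : k + 1 = 0 := by
        rw [← hk, hveq]
        have h2 : ((2*p - 1 : ℕ) : ZMod (2*p)) + 1 = ((2*p : ℕ) : ZMod (2*p)) := by
          rw [Nat.cast_sub (by omega : 1 ≤ 2*p)]; push_cast; ring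
        rw [h2, ZMod.natCast_self]
      unfold mu; rw [e1, ZMod.val_zero]
      split_ifs <;> omega
  · have e1 : k - 1 = ((v - 1 : ℕ) : ZMod (2*p)) := by
      rw [← hk, Nat.cast_sub (by omega : 1 ≤ v)]; push_cast; ring
    have e2 : (k - 1).val = v - 1 := by rw [e1, ZMod.val_cast_of_lt (by omega)]
    unfold mu; rw [e2]; split_ifs <;> omega

lemma sign_flip (p : ℕ) (hp : 0 < p) (x y : ZMod (2*p))
    (h : ((x + y).val) % 2 = 1) :
    ((-1 : ZMod (2*p)) ^ x.val) = -((-1 : ZMod (2*p)) ^ y.val) := by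
  haveI : NeZero (2*p) := ⟨by omega⟩
  have hadd : (x + y).val = (x.val + y.val) % (2*p) := ZMod.val_add x y
  have hdvd : (2:ℕ) ∣ 2*p := ⟨p, rfl⟩
  have h2 : (x.val + y.val) % 2 = 1 := by
    have hm := Nat.mod_mod_of_dvd (x.val + y.val) hdvd
    omega
  rcases Nat.even_or_odd x.val with hx | hx
  · have hy : Odd y.val := by
      rw [Nat.odd_iff]; rw [Nat.even_iff] at hx; omega
    rw [hx.neg_one_pow, hy.neg_one_pow, neg_neg]
  · have hy : Even y.val := by
      rw [Nat.even_iff]; rw [Nat.odd_iff] at hx; omega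
    rw [hx.neg_one_pow, hy.neg_one_pow]

/-- If p is even then ε₃ε₂ = ε₂ε₃ away from j ∈ {0,1,p,p+1} and
ε₀ε₁ = ε₁ε₀ away from j ∈ {q,q+1,q+p,q+p+1}. -/
theorem partial_commute_even_p (n p : ℕ) (hn : 0 < n) (hp : 0 < p) (hpe : Even p)
    (q : ZMod (2*p)) (m : ZMod n) :
    (∀ (i : ZMod n) (j : ZMod (2*p)),
      j ∉ ({0, 1, (p : ZMod (2*p)), (p : ZMod (2*p)) + 1} : Set (ZMod (2*p))) →
      eps3 n p (eps2 n p (i, j)) = eps2 n p (eps3 n p (i, j))) ∧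
    (∀ (i : ZMod n) (j : ZMod (2*p)),
      j ∉ ({q, q + 1, q + (p : ZMod (2*p)), q + (p : ZMod (2*p)) + 1} : Set (ZMod (2*p))) →
      eps0 n p q m (eps1 n p (i, j)) = eps1 n p (eps0 n p q m (i, j))) := by
  haveI : NeZero (2*p) := ⟨by omega⟩
  have hp2 : 2 ≤ p := by obtain ⟨r, hr⟩ := hpe; omega
  haveI : Fact (1 < 2*p) := ⟨by omega⟩
  have hval1 : (1 : ZMod (2*p)).val = 1 := ZMod.val_one _
  constructor
  · rintro i j hj
    simp only [Set.mem_insert_iff, Set.mem_singleton_iff, not_or] at hj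
    obtain ⟨h0, h1, hP, hP1⟩ := hj
    obtain ⟨hA, hB⟩ := mu_shift p hp2 j h0 h1 hP hP1
    simp only [eps2, eps3, Prod.mk.injEq]
    constructor
    · rcases neg_one_pow_eq_or (ZMod (2*p)) j.val with h | h
      · rw [h, hA]
      · rw [h, show j + (-1 : ZMod (2*p)) = j - 1 by ring, hB]
    · have hs : (-1 : ZMod (2*p)) ^ (1 - j).val = -(-1 : ZMod (2*p)) ^ j.val := by
        apply sign_flip p hp
        rw [show (1 - j) + j = 1 by ring, hval1]
      rw [hs]; ring
  · rintro i j hj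
    simp only [Set.mem_insert_iff, Set.mem_singleton_iff, not_or] at hj
    obtain ⟨h0, h1, hP, hP1⟩ := hj
    have k0 : j - q ≠ 0 := sub_ne_zero.mpr h0
    have k1 : j - q ≠ 1 := by intro h; exact h1 (by linear_combination h)
    have kP : j - q ≠ (p : ZMod (2*p)) := by intro h; exact hP (by linear_combination h)
    have kP1 : j - q ≠ (p : ZMod (2*p)) + 1 := by intro h; exact hP1 (by linear_combination h)
    obtain ⟨hA, hB⟩ := mu_shift p hp2 (j - q) k0 k1 kP kP1
    simp only [eps0, eps1, Prod.mk.injEq]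
    constructor
    · rcases neg_one_pow_eq_or (ZMod (2*p)) j.val with h | h
      · rw [h, show j - 1 - q = (j - q) - 1 by ring, hB]
      · rw [h, show j - (-1 : ZMod (2*p)) - q = (j - q) + 1 by ring, hA]
    · have hs : (-1 : ZMod (2*p)) ^ (1 - j + 2*q).val = -(-1 : ZMod (2*p)) ^ j.val := by
        apply sign_flip p hp
        rw [show (1 - j + 2*q) + j = 1 + 2*q by ring]
        have hdvd : (2:ℕ) ∣ 2*p := ⟨p, rfl⟩
        have hq2 : (2*q : ZMod (2*p)).val % 2 = 0 := by
          rw [show (2*q : ZMod (2*p)) = q + q by ring, ZMod.val_add]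
          rw [Nat.mod_mod_of_dvd _ hdvd]
          omega
        rw [ZMod.val_add, Nat.mod_mod_of_dvd _ hdvd, hval1]
        omega
      rw [hs]; ring
end

section
/- If p is odd, then ε₃ε₁(i,j) = ε₁ε₃(i,j) for every i ∈ Z_n and every j ∈ Z_{2p} with j ∉ {p, p+1}, and ε₃ε₂(i,j) = ε₂ε₃(i,j) for every i and every j ∉ {0, 1}. -/
lemma zmod_val_sub_one (p : ℕ) (hp : 0 < p) (j : ZMod (2*p)) :
    (j - 1).val = if j.val = 0 then 2*p - 1 else j.val - 1 := by
  haveI : NeZero (2*p) := ⟨by omega⟩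
  have hj : ((j.val : ℕ) : ZMod (2*p)) = j := by
    simp [ZMod.natCast_val, ZMod.cast_id]
  have hlt : j.val < 2*p := ZMod.val_lt j
  split_ifs with h
  · have hj0 : j = 0 := (ZMod.val_eq_zero j).mp h
    have : j - 1 = ((2*p - 1 : ℕ) : ZMod (2*p)) := by
      have hself : ((2*p : ℕ) : ZMod (2*p)) = 0 := ZMod.natCast_self _
      rw [hj0, Nat.cast_sub (by omega : 1 ≤ 2*p), hself]
      push_cast; ring
    rw [this, ZMod.val_cast_of_lt (by omega)]
  · have : j - 1 = ((j.val - 1 : ℕ) : ZMod (2*p)) := by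
      push_cast [Nat.cast_sub (by omega : 1 ≤ j.val), hj]
      ring
    rw [this, ZMod.val_cast_of_lt (by omega)]

lemma zmod_val_add_one (p : ℕ) (hp : 0 < p) (j : ZMod (2*p)) :
    (j + 1).val = if j.val = 2*p - 1 then 0 else j.val + 1 := by
  haveI : NeZero (2*p) := ⟨by omega⟩
  have hj : ((j.val : ℕ) : ZMod (2*p)) = j := by
    simp [ZMod.natCast_val, ZMod.cast_id]
  have hlt : j.val < 2*p := ZMod.val_lt j
  split_ifs with h
  · have hself : ((2*p : ℕ) : ZMod (2*p)) = 0 := ZMod.natCast_self _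
    have : j + 1 = 0 := by
      rw [← hj, h, Nat.cast_sub (by omega : 1 ≤ 2*p), hself]
      push_cast; ring
    rw [this]; exact ZMod.val_zero
  · have : j + 1 = ((j.val + 1 : ℕ) : ZMod (2*p)) := by push_cast [hj]; ring
    rw [this, ZMod.val_cast_of_lt (by omega)]

lemma zmod_val_one_sub (p : ℕ) (hp : 0 < p) (j : ZMod (2*p)) :
    ((1 : ZMod (2*p)) - j).val =
      if j.val = 0 then 1 else if j.val = 1 then 0 else 2*p + 1 - j.val := by
  haveI : NeZero (2*p) := ⟨by omega⟩
  have hj : ((j.val : ℕ) : ZMod (2*p)) = j := by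
    simp [ZMod.natCast_val, ZMod.cast_id]
  have hlt : j.val < 2*p := ZMod.val_lt j
  split_ifs with h0 h1
  · have hj0 : j = 0 := (ZMod.val_eq_zero j).mp h0
    rw [hj0, sub_zero]
    have : (1 : ZMod (2*p)) = ((1 : ℕ) : ZMod (2*p)) := by push_cast; ring
    rw [this, ZMod.val_cast_of_lt (by omega)]
  · have hj1 : j = 1 := by rw [← hj, h1]; push_cast; ring
    rw [hj1, sub_self]; exact ZMod.val_zero
  · have : (1 : ZMod (2*p)) - j = ((2*p + 1 - j.val : ℕ) : ZMod (2*p)) := by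
      have hself : ((2*p : ℕ) : ZMod (2*p)) = 0 := ZMod.natCast_self _
      rw [Nat.cast_sub (by omega : j.val ≤ 2*p + 1), Nat.cast_add, hself, hj]
      push_cast; ring
    rw [this, ZMod.val_cast_of_lt (by omega)]



/-- If p is odd then ε₃ε₁ = ε₁ε₃ away from j ∈ {p,p+1} and
ε₃ε₂ = ε₂ε₃ away from j ∈ {0,1}. -/
theorem partial_commute_odd_p (n p : ℕ) (hn : 0 < n) (hp : 0 < p) (hpo : Odd p)
    (q : ZMod (2*p)) (m : ZMod n) :
    (∀ (i : ZMod n) (j : ZMod (2*p)),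
      j ∉ ({(p : ZMod (2*p)), (p : ZMod (2*p)) + 1} : Set (ZMod (2*p))) →
      eps3 n p (eps1 n p (i, j)) = eps1 n p (eps3 n p (i, j))) ∧
    (∀ (i : ZMod n) (j : ZMod (2*p)),
      j ∉ ({0, 1} : Set (ZMod (2*p))) →
      eps3 n p (eps2 n p (i, j)) = eps2 n p (eps3 n p (i, j))) := by
  haveI : NeZero (2*p) := ⟨by omega⟩
  obtain ⟨s, hs⟩ := hpo
  rcases Nat.lt_or_ge p 2 with hp1 | hp2
  · have hp1' : p = 1 := by omega
    subst hp1'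
    constructor
    · intro i j hj
      exfalso; apply hj
      have hjc : ((j.val : ℕ) : ZMod (2*1)) = j := by
        simp [ZMod.natCast_val, ZMod.cast_id]
      have hlt : j.val < 2*1 := ZMod.val_lt j
      simp only [Set.mem_insert_iff, Set.mem_singleton_iff]
      rcases (by omega : j.val = 0 ∨ j.val = 1) with hv | hv <;>
        rw [← hjc, hv] <;> [right; left] <;> decide
    · intro i j hj
      exfalso; apply hj
      have hjc : ((j.val : ℕ) : ZMod (2*1)) = j := by
        simp [ZMod.natCast_val, ZMod.cast_id]
      have hlt : j.val < 2*1 := ZMod.val_lt j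
      simp only [Set.mem_insert_iff, Set.mem_singleton_iff]
      rcases (by omega : j.val = 0 ∨ j.val = 1) with hv | hv <;>
        rw [← hjc, hv] <;> [left; right] <;> decide
  constructor
  · intro i j hj
    simp only [Set.mem_insert_iff, Set.mem_singleton_iff, not_or] at hj
    obtain ⟨hjp, hjp1⟩ := hj
    have hjc : ((j.val : ℕ) : ZMod (2*p)) = j := by
      simp [ZMod.natCast_val, ZMod.cast_id]
    have hlt : j.val < 2*p := ZMod.val_lt j
    have hkp : j.val ≠ p := by
      intro h; apply hjp; rw [← hjc, h]
    have hkp1 : j.val ≠ p + 1 := by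
      intro h; apply hjp1; rw [← hjc, h]; push_cast; ring
    simp only [eps1, eps3]
    rcases Nat.even_or_odd j.val with ⟨t, ht⟩ | ⟨t, ht⟩
    · have hpow : (-1 : ZMod (2*p)) ^ j.val = 1 := Even.neg_one_pow ⟨t, ht⟩
      rw [hpow]
      have hodd : Odd ((1 - j : ZMod (2*p)).val) := by
        rw [Nat.odd_iff, zmod_val_one_sub p hp]
        split_ifs <;> omega
      rw [hodd.neg_one_pow]
      refine Prod.ext ?_ ?_
      · show i + _ = i + _
        congr 2
        simp only [mu, zmod_val_sub_one p hp]
        split_ifs <;> first | rfl | omega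
      · show 1 - (j - 1) = 1 - j - (-1)
        ring
    · have hpow : (-1 : ZMod (2*p)) ^ j.val = -1 := Odd.neg_one_pow ⟨t, ht⟩
      rw [hpow, sub_neg_eq_add]
      have heven : Even ((1 - j : ZMod (2*p)).val) := by
        rw [Nat.even_iff, zmod_val_one_sub p hp]
        split_ifs <;> omega
      rw [heven.neg_one_pow]
      refine Prod.ext ?_ ?_
      · show i + _ = i + _
        congr 2
        simp only [mu, zmod_val_add_one p hp]
        split_ifs <;> first | rfl | omega
      · show 1 - (j + 1) = 1 - j - 1
        ring
  · intro i j hj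
    simp only [Set.mem_insert_iff, Set.mem_singleton_iff, not_or] at hj
    obtain ⟨hj0, hj1⟩ := hj
    have hjc : ((j.val : ℕ) : ZMod (2*p)) = j := by
      simp [ZMod.natCast_val, ZMod.cast_id]
    have hlt : j.val < 2*p := ZMod.val_lt j
    have hk0 : j.val ≠ 0 := fun h => hj0 ((ZMod.val_eq_zero j).mp h)
    have hk1 : j.val ≠ 1 := by
      intro h; apply hj1; rw [← hjc, h]; push_cast; ring
    simp only [eps2, eps3]
    rcases Nat.even_or_odd j.val with ⟨t, ht⟩ | ⟨t, ht⟩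
    · have hpow : (-1 : ZMod (2*p)) ^ j.val = 1 := Even.neg_one_pow ⟨t, ht⟩
      rw [hpow]
      have hodd : Odd ((1 - j : ZMod (2*p)).val) := by
        rw [Nat.odd_iff, zmod_val_one_sub p hp]
        split_ifs <;> omega
      rw [hodd.neg_one_pow]
      refine Prod.ext ?_ ?_
      · show i + _ = i + _
        congr 2
        simp only [mu, zmod_val_add_one p hp]
        split_ifs <;> first | rfl | omega
      · show 1 - (j + 1) = 1 - j + (-1)
        ring
    · have hpow : (-1 : ZMod (2*p)) ^ j.val = -1 := Odd.neg_one_pow ⟨t, ht⟩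
      rw [hpow]
      have heven : Even ((1 - j : ZMod (2*p)).val) := by
        rw [Nat.even_iff, zmod_val_one_sub p hp]
        split_ifs <;> omega
      rw [heven.neg_one_pow]
      refine Prod.ext ?_ ?_
      · show i + _ = i + _
        congr 2
        have : j + -1 = j - 1 := by ring
        rw [this]
        simp only [mu, zmod_val_sub_one p hp]
        split_ifs <;> first | rfl | omega
      · show 1 - (j + -1) = 1 - j + 1
        ring
end
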